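/- arXiv:0910.4145 — 4 statements merged into one kernel-verified Lean document; each statement's English description precedes it below -/
import Mathlib

section
/- Let N ≥ 3 and let x : Fin N → ℝ satisfy 0 ≤ xᵢ ≤ 1 for all i and ∑ᵢ xᵢ = 2. Define S = ∑ over triples i < j < k with (k − i) even and (j − i) odd of xᵢ·xⱼ·xₖ. Then S < 1/3. -/
theorem stmt_1 (N : ℕ) (hN : 3 ≤ N) (x : Fin N → ℝ)
    (hx0 : ∀ i, 0 ≤ x i) (hx1 : ∀ i, x i ≤ 1)
    (hsum : ∑ i, x i = 2) :
    (∑ i : Fin N, ∑ j : Fin N, ∑ k : Fin N,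
        if i < j ∧ j < k ∧ (k.val - i.val) % 2 = 0 ∧ (j.val - i.val) % 2 = 1
        then x i * x j * x k else 0) < 1 / 3 := by
  classical
  set y : ℕ → ℝ := fun n => if h : n < N then x ⟨n, h⟩ else 0 with hy
  have hyval : ∀ i : Fin N, y i.val = x i := by
    intro i
    simp only [hy]
    rw [dif_pos i.isLt]
  have hy0 : ∀ n, 0 ≤ y n := by
    intro n
    simp only [hy]
    split
    · exact hx0 _
    · exact le_rfl
  set u : ℕ → ℝ := fun n => ∑ i ∈ Finset.range n, if i % 2 = 0 then y i else 0 with hu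
  set v : ℕ → ℝ := fun n => ∑ i ∈ Finset.range n, if i % 2 = 1 then y i else 0 with hv
  set P : Fin N → ℝ := fun j => ∑ i : Fin N,
    if i.val < j.val ∧ (i.val + j.val) % 2 = 1 then x i else 0 with hP
  set Q : Fin N → ℝ := fun j => ∑ k : Fin N,
    if j.val < k.val ∧ (k.val + j.val) % 2 = 1 then x k else 0 with hQ
  have hpt : ∀ i j k : Fin N,
      (if i < j ∧ j < k ∧ (k.val - i.val) % 2 = 0 ∧ (j.val - i.val) % 2 = 1
        then x i * x j * x k else 0)
      = (if i.val < j.val ∧ (i.val + j.val) % 2 = 1 then x i else 0) *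
        ((if j.val < k.val ∧ (k.val + j.val) % 2 = 1 then x k else 0) * x j) := by
    intro i j k
    simp only [Fin.lt_def]
    split_ifs <;> first | ring1 | (exfalso; omega)
  have hS1 : (∑ i : Fin N, ∑ j : Fin N, ∑ k : Fin N,
        if i < j ∧ j < k ∧ (k.val - i.val) % 2 = 0 ∧ (j.val - i.val) % 2 = 1
        then x i * x j * x k else 0)
      = ∑ j : Fin N, P j * (Q j * x j) := by
    simp only [hpt]
    rw [Finset.sum_comm]
    refine Finset.sum_congr rfl fun j _ => ?_
    simp only [hP, hQ]
    rw [Finset.sum_mul]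
    refine Finset.sum_congr rfl fun i _ => ?_
    rw [Finset.sum_mul, Finset.mul_sum]
  -- value of P
  have hPval : ∀ j : Fin N, P j = if j.val % 2 = 0 then v j.val else u j.val := by
    intro j
    have h1 : P j = ∑ n ∈ Finset.range N,
        (if n < j.val ∧ (n + j.val) % 2 = 1 then y n else 0) := by
      rw [← Fin.sum_univ_eq_sum_range (fun n => if n < j.val ∧ (n + j.val) % 2 = 1 then y n else 0) N]
      simp only [hP]
      refine Finset.sum_congr rfl fun i _ => ?_
      rw [hyval]
    have h2 : ∑ n ∈ Finset.range N, (if n < j.val ∧ (n + j.val) % 2 = 1 then y n else 0)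
        = ∑ n ∈ Finset.range j.val, (if n < j.val ∧ (n + j.val) % 2 = 1 then y n else 0) := by
      refine (Finset.sum_subset (Finset.range_subset_range.mpr j.isLt.le) ?_).symm
      intro n hn hn2
      simp only [Finset.mem_range] at hn hn2
      exact if_neg (by omega)
    rw [h1, h2]
    by_cases hj : j.val % 2 = 0
    · rw [if_pos hj]
      simp only [hv]
      refine Finset.sum_congr rfl fun n hn => ?_
      simp only [Finset.mem_range] at hn
      have hiff : (n < j.val ∧ (n + j.val) % 2 = 1) ↔ n % 2 = 1 := by omega
      simp only [hiff]
    · rw [if_neg hj]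
      simp only [hu]
      refine Finset.sum_congr rfl fun n hn => ?_
      simp only [Finset.mem_range] at hn
      have hiff : (n < j.val ∧ (n + j.val) % 2 = 1) ↔ n % 2 = 0 := by omega
      simp only [hiff]
  have hPQ : ∀ j : Fin N, P j + Q j = if j.val % 2 = 0 then v N else u N := by
    intro j
    have h1 : P j + Q j = ∑ i : Fin N, (if (i.val + j.val) % 2 = 1 then x i else 0) := by
      simp only [hP, hQ]
      rw [← Finset.sum_add_distrib]
      refine Finset.sum_congr rfl fun i _ => ?_
      split_ifs <;> first | ring1 | (exfalso; omega)
    have h2 : ∑ i : Fin N, (if (i.val + j.val) % 2 = 1 then x i else 0)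
        = ∑ n ∈ Finset.range N, (if (n + j.val) % 2 = 1 then y n else 0) := by
      rw [← Fin.sum_univ_eq_sum_range (fun n => if (n + j.val) % 2 = 1 then y n else 0) N]
      refine Finset.sum_congr rfl fun i _ => ?_
      rw [hyval]
    rw [h1, h2]
    by_cases hj : j.val % 2 = 0
    · rw [if_pos hj]
      simp only [hv]
      refine Finset.sum_congr rfl fun n _ => ?_
      have hiff : (n + j.val) % 2 = 1 ↔ n % 2 = 1 := by omega
      simp only [hiff]
    · rw [if_neg hj]
      simp only [hu]
      refine Finset.sum_congr rfl fun n _ => ?_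
      have hiff : (n + j.val) % 2 = 1 ↔ n % 2 = 0 := by omega
      simp only [hiff]
  have hQval : ∀ j : Fin N, Q j = (if j.val % 2 = 0 then v N else u N) - P j := by
    intro j
    have := hPQ j
    linarith
  set g : ℕ → ℝ := fun n => (if n % 2 = 0 then v n else u n) *
      (((if n % 2 = 0 then v N else u N) - (if n % 2 = 0 then v n else u n)) * y n) with hg
  have hS2 : ∑ j : Fin N, P j * (Q j * x j) = ∑ n ∈ Finset.range N, g n := by
    rw [← Fin.sum_univ_eq_sum_range g N]
    refine Finset.sum_congr rfl fun j _ => ?_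
    simp only [hg]
    rw [hQval j, hPval j, ← hyval j]
  -- potential function
  set F : ℕ → ℝ := fun n =>
    (v N) * u n * v n - u n * (v n)^2
      - (v n - u n - (v N - u N)/2)^3/6 + (v n - (v N - u N)/2)^3/3 with hF
  have hun : ∀ n, u (n+1) = u n + (if n % 2 = 0 then y n else 0) := by
    intro n
    simp only [hu]
    rw [Finset.sum_range_succ]
  have hvn : ∀ n, v (n+1) = v n + (if n % 2 = 1 then y n else 0) := by
    intro n
    simp only [hv]
    rw [Finset.sum_range_succ]
  have hstep : ∀ n, g n + (y n)^3/24 ≤ F (n+1) - F n := by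
    intro n
    by_cases hn : n % 2 = 0
    · have h1 : u (n+1) = u n + y n := by rw [hun n, if_pos hn]
      have h2 : v (n+1) = v n := by rw [hvn n, if_neg (by omega)]; ring
      have hid : F (n+1) - F n - (g n + (y n)^3/24)
          = y n/2 * (v n - u n - (v N - u N)/2 - y n/2)^2 := by
        simp only [hF, hg, if_pos hn]
        rw [h1, h2]
        ring
      have hnn : 0 ≤ y n/2 * (v n - u n - (v N - u N)/2 - y n/2)^2 :=
        mul_nonneg (by linarith [hy0 n]) (sq_nonneg _)
      linarith
    · have h1 : u (n+1) = u n := by rw [hun n, if_neg hn]; ring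
      have h2 : v (n+1) = v n + y n := by rw [hvn n, if_pos (by omega)]
      have hid : F (n+1) - F n - (g n + (y n)^3/24)
          = y n/2 * (v n - u n - (v N - u N)/2 + y n/2)^2 := by
        simp only [hF, hg, if_neg hn]
        rw [h1, h2]
        ring
      have hnn : 0 ≤ y n/2 * (v n - u n - (v N - u N)/2 + y n/2)^2 :=
        mul_nonneg (by linarith [hy0 n]) (sq_nonneg _)
      linarith
  have hsum_y : ∑ n ∈ Finset.range N, y n = 2 := by
    rw [← Fin.sum_univ_eq_sum_range y N]
    rw [← hsum]
    exact Finset.sum_congr rfl fun i _ => hyval i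
  have hu0 : u 0 = 0 := by simp [hu]
  have hv0 : v 0 = 0 := by simp [hv]
  have hAB : u N + v N = 2 := by
    have h1 : u N + v N = ∑ n ∈ Finset.range N, y n := by
      simp only [hu, hv]
      rw [← Finset.sum_add_distrib]
      refine Finset.sum_congr rfl fun n _ => ?_
      by_cases h : n % 2 = 0
      · rw [if_pos h, if_neg (by omega)]; ring
      · rw [if_neg h, if_pos (by omega)]; ring
    rw [h1, hsum_y]
  have hFN : F N - F 0 = 1/3 := by
    have h2 : v N = 2 - u N := by linarith
    simp only [hF, hu0, hv0]
    rw [h2]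
    ring
  have hsumstep : ∑ n ∈ Finset.range N, g n + ∑ n ∈ Finset.range N, (y n)^3/24
      ≤ 1/3 := by
    have h1 : ∑ n ∈ Finset.range N, (g n + (y n)^3/24)
        ≤ ∑ n ∈ Finset.range N, (F (n+1) - F n) :=
      Finset.sum_le_sum fun n _ => hstep n
    rw [Finset.sum_range_sub F N, hFN, Finset.sum_add_distrib] at h1
    exact h1
  have hcube : 0 < ∑ n ∈ Finset.range N, (y n)^3/24 := by
    obtain ⟨n, hn, hpos⟩ : ∃ n ∈ Finset.range N, 0 < y n := by
      by_contra h
      push_neg at h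
      have : ∑ n ∈ Finset.range N, y n ≤ 0 := Finset.sum_nonpos h
      linarith
    have h1 : ∀ m ∈ Finset.range N, 0 ≤ (y m)^3/24 :=
      fun m _ => div_nonneg (pow_nonneg (hy0 m) 3) (by norm_num)
    have h2 : 0 < (y n)^3/24 := by positivity
    exact lt_of_lt_of_le h2 (Finset.single_le_sum h1 hn)
  rw [hS1, hS2]
  linarith
end

section
/- For odd N = 2K+1, if x₁ = x₂ = ⋯ = x_N = 2/N, then the sum S = ∑_{i<j<k, 2|(k−i), 2∤(j−i)} xᵢxⱼxₖ equals (1/3)(1 − 1/N²), and in particular S < 1/3. -/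
open Finset

lemma ind_mul (P Q : Prop) [Decidable P] [Decidable Q] :
    (if P ∧ Q then (1:ℝ) else 0) = (if P then (1:ℝ) else 0) * (if Q then (1:ℝ) else 0) := by
  by_cases hP : P <;> by_cases hQ : Q <;> simp [hP, hQ]

lemma cardA (N j : ℕ) (hj : j < N) :
    ((range N).filter (fun i => i < j ∧ (i + j) % 2 = 1)).card = (j+1)/2 := by
  have h : (range N).filter (fun i => i < j ∧ (i + j) % 2 = 1)
      = (range ((j+1)/2)).image (fun m => 2*m + (j+1)%2) := by
    ext a
    simp only [mem_filter, mem_range, mem_image]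
    constructor
    · intro h; exact ⟨a/2, by omega, by omega⟩
    · rintro ⟨m, hm, rfl⟩; omega
  rw [h, card_image_of_injective _ (fun a b h => by omega), card_range]

lemma cardB (N j : ℕ) :
    ((range N).filter (fun k => j < k ∧ (j + k) % 2 = 1)).card = (N - j)/2 := by
  have h : (range N).filter (fun k => j < k ∧ (j + k) % 2 = 1)
      = (range ((N-j)/2)).image (fun m => j + 1 + 2*m) := by
    ext a
    simp only [mem_filter, mem_range, mem_image]
    constructor
    · intro h; exact ⟨(a - j - 1)/2, by omega, by omega⟩
    · rintro ⟨m, hm, rfl⟩; omega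
  rw [h, card_image_of_injective _ (fun a b h => by omega), card_range]

lemma sumhalf (n : ℕ) : ∑ j ∈ range n, (j+1)/2 = (n/2) * ((n+1)/2) := by
  induction n with
  | zero => simp
  | succ n ih =>
    rw [sum_range_succ, ih]
    rcases Nat.even_or_odd n with ⟨m, rfl⟩ | ⟨m, rfl⟩
    · have e1 : (m+m)/2 = m := by omega
      have e2 : (m+m+1)/2 = m := by omega
      have e3 : (m+m+1+1)/2 = m+1 := by omega
      rw [e1, e2, e3]; ring
    · have e1 : (2*m+1)/2 = m := by omega
      have e2 : (2*m+1+1)/2 = m+1 := by omega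
      have e3 : (2*m+1+1+1)/2 = m+1 := by omega
      rw [e1, e2, e3]; ring

lemma countF (K : ℕ) :
    6 * ∑ j ∈ range (2*K+1), ((j+1)/2) * ((2*K+1 - j)/2) = K * (K+1) * (2*K+1) := by
  induction K with
  | zero => simp
  | succ K ih =>
    have h1 : ∑ j ∈ range (2*(K+1)+1), ((j+1)/2) * ((2*(K+1)+1 - j)/2)
        = (∑ j ∈ range (2*K+1), ((j+1)/2) * ((2*K+1 - j)/2))
          + (∑ j ∈ range (2*K+1), (j+1)/2) + (K+1) := by
      have h2 : 2*(K+1)+1 = (2*K+1) + 1 + 1 := by ring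
      rw [h2, sum_range_succ, sum_range_succ]
      have h3 : ∀ j ∈ range (2*K+1), ((j+1)/2) * ((2*K+1+1+1 - j)/2)
          = ((j+1)/2) * ((2*K+1 - j)/2) + (j+1)/2 := by
        intro j hj
        rw [mem_range] at hj
        have e : (2*K+1+1+1 - j)/2 = (2*K+1 - j)/2 + 1 := by omega
        rw [e, Nat.mul_add, Nat.mul_one]
      rw [sum_congr rfl h3, sum_add_distrib]
      have e1 : ((2*K+1+1)/2) * ((2*K+1+1+1 - (2*K+1))/2) = K+1 := by
        have a1 : (2*K+1+1)/2 = K+1 := by omega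
        have a2 : (2*K+1+1+1 - (2*K+1))/2 = 1 := by omega
        rw [a1, a2, Nat.mul_one]
      have e2 : ((2*K+2+1)/2) * ((2*K+1+1+1 - (2*K+2))/2) = 0 := by
        have a2 : (2*K+1+1+1 - (2*K+2))/2 = 0 := by omega
        rw [a2, Nat.mul_zero]
      omega
    rw [h1, sumhalf]
    have e3 : (2*K+1)/2 = K := by omega
    have e4 : (2*K+1+1)/2 = K+1 := by omega
    rw [e3, e4, Nat.mul_add, Nat.mul_add, ih]
    ring



theorem stmt_2 (K : ℕ) (N : ℕ) (hN : N = 2 * K + 1) (x : Fin N → ℝ)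
    (hx : ∀ i, x i = 2 / N) :
    (∑ i : Fin N, ∑ j : Fin N, ∑ k : Fin N,
        if i < j ∧ j < k ∧ (k.val - i.val) % 2 = 0 ∧ (j.val - i.val) % 2 = 1
        then x i * x j * x k else 0)
      = (1 / 3) * (1 - 1 / (N : ℝ) ^ 2) ∧
    (∑ i : Fin N, ∑ j : Fin N, ∑ k : Fin N,
        if i < j ∧ j < k ∧ (k.val - i.val) % 2 = 0 ∧ (j.val - i.val) % 2 = 1
        then x i * x j * x k else 0) < 1 / 3 := by
  set c : ℝ := 2 / N with hc
  have hN0 : (0:ℝ) < N := by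
    rw [hN]; positivity
  have main : (∑ i : Fin N, ∑ j : Fin N, ∑ k : Fin N,
        if i < j ∧ j < k ∧ (k.val - i.val) % 2 = 0 ∧ (j.val - i.val) % 2 = 1
        then x i * x j * x k else 0)
      = (1 / 3) * (1 - 1 / (N : ℝ) ^ 2) := by
    have step1 : ∀ i j k : Fin N,
        (if i < j ∧ j < k ∧ (k.val - i.val) % 2 = 0 ∧ (j.val - i.val) % 2 = 1
          then x i * x j * x k else 0)
        = ((if i.val < j.val ∧ (i.val + j.val) % 2 = 1 then (1:ℝ) else 0)
            * (if j.val < k.val ∧ (j.val + k.val) % 2 = 1 then (1:ℝ) else 0)) * (c*c*c) := by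
      intro i j k
      have hiff : (i < j ∧ j < k ∧ (k.val - i.val) % 2 = 0 ∧ (j.val - i.val) % 2 = 1)
          ↔ ((i.val < j.val ∧ (i.val + j.val) % 2 = 1)
              ∧ (j.val < k.val ∧ (j.val + k.val) % 2 = 1)) := by
        simp only [Fin.lt_def]; omega
      rw [if_congr hiff rfl rfl, hx i, hx j, hx k]
      by_cases h1 : i.val < j.val ∧ (i.val + j.val) % 2 = 1 <;>
        by_cases h2 : j.val < k.val ∧ (j.val + k.val) % 2 = 1
      · rw [if_pos ⟨h1, h2⟩, if_pos h1, if_pos h2]; ring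
      · rw [if_neg (fun h => h2 h.2), if_pos h1, if_neg h2]; ring
      · rw [if_neg (fun h => h1 h.1), if_neg h1, if_pos h2]; ring
      · rw [if_neg (fun h => h1 h.1), if_neg h1, if_neg h2]; ring
    simp only [step1]
    have step2 : (∑ i : Fin N, ∑ j : Fin N, ∑ k : Fin N,
        ((if i.val < j.val ∧ (i.val + j.val) % 2 = 1 then (1:ℝ) else 0)
            * (if j.val < k.val ∧ (j.val + k.val) % 2 = 1 then (1:ℝ) else 0)) * (c*c*c))
        = (∑ j : Fin N, (((j.val+1)/2 : ℕ) : ℝ) * (((N - j.val)/2 : ℕ) : ℝ)) * (c*c*c) := by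
      rw [sum_comm]
      simp only [← Finset.sum_mul]
      congr 1
      refine Finset.sum_congr rfl ?_
      intro j _
      calc ∑ i : Fin N, ∑ k : Fin N,
            (if i.val < j.val ∧ (i.val + j.val) % 2 = 1 then (1:ℝ) else 0)
            * (if j.val < k.val ∧ (j.val + k.val) % 2 = 1 then (1:ℝ) else 0)
          = (∑ i : Fin N, if i.val < j.val ∧ (i.val + j.val) % 2 = 1 then (1:ℝ) else 0)
            * (∑ k : Fin N, if j.val < k.val ∧ (j.val + k.val) % 2 = 1 then (1:ℝ) else 0) := by
            rw [Finset.sum_mul_sum]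
        _ = (((j.val+1)/2 : ℕ) : ℝ) * (((N - j.val)/2 : ℕ) : ℝ) := by
            congr 1
            · rw [Fin.sum_univ_eq_sum_range (fun i => if i < j.val ∧ (i + j.val) % 2 = 1 then (1:ℝ) else 0)]
              rw [Finset.sum_boole, cardA N j.val j.isLt]
            · rw [Fin.sum_univ_eq_sum_range (fun k => if j.val < k ∧ (j.val + k) % 2 = 1 then (1:ℝ) else 0)]
              rw [Finset.sum_boole, cardB N j.val]
    rw [step2]
    have step3 : (∑ j : Fin N, (((j.val+1)/2 : ℕ) : ℝ) * (((N - j.val)/2 : ℕ) : ℝ))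
        = ((∑ j ∈ range N, ((j+1)/2) * ((N - j)/2) : ℕ) : ℝ) := by
      rw [Nat.cast_sum]
      rw [Fin.sum_univ_eq_sum_range (fun j => (((j+1)/2 : ℕ) : ℝ) * (((N - j)/2 : ℕ) : ℝ))]
      exact Finset.sum_congr rfl (fun j _ => by push_cast; ring)
    rw [step3]
    have hT := countF K
    rw [← hN] at hT
    have hT' : (6:ℝ) * ((∑ j ∈ range N, ((j+1)/2) * ((N - j)/2) : ℕ) : ℝ)
        = (K:ℝ) * ((K:ℝ)+1) * (N:ℝ) := by exact_mod_cast hT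
    have hNr : (N:ℝ) = 2*(K:ℝ)+1 := by rw [hN]; push_cast; ring
    have hTval : ((∑ j ∈ range N, ((j+1)/2) * ((N - j)/2) : ℕ) : ℝ)
        = (K:ℝ) * ((K:ℝ)+1) * (N:ℝ) / 6 := by linarith
    rw [hTval, hc, hNr]
    have h2K : (2*(K:ℝ)+1) ≠ 0 := by positivity
    field_simp
    ring
  refine ⟨main, ?_⟩
  rw [main]
  have : (0:ℝ) < 1 / (N:ℝ)^2 := by positivity
  nlinarith
end

section
/- Let H be a finite-dimensional complex Hilbert space, U₀ a unitary operator, (U_ω, p_ω) a finite probability distribution over unitary operators, ρ₀ a density matrix, and ψ₀ a unit vector. Set ρ₁ = ∑_ω p_ω U_ω ρ₀ U_ω† and ρ₁' = U₀ |ψ₀⟩⟨ψ₀| U₀†. Then Tr|ρ₁ − ρ₁'| ≤ Tr|ρ₀ − |ψ₀⟩⟨ψ₀|| + 2‖∑_ω p_ω U_ω − U₀‖ + ∑_ω p_ω ‖U_ω − U₀‖². -/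
open scoped Matrix ComplexOrder

/-- The operator (spectral) norm of a complex matrix. -/
noncomputable def opNorm {n : ℕ} (A : Matrix (Fin n) (Fin n) ℂ) : ℝ :=
  ‖Matrix.toEuclideanCLM (𝕜 := ℂ) A‖

/-- The trace norm `Tr|A| = Tr √(AᴴA)` of a complex matrix. -/
noncomputable def traceNorm {n : ℕ} (A : Matrix (Fin n) (Fin n) ℂ) : ℝ :=
  ((Matrix.posSemidef_conjTranspose_mul_self A).isHermitian.eigenvectorUnitary.1 *
      Matrix.diagonal ((fun x : ℝ => (x : ℂ)) ∘ Real.sqrt ∘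
        (Matrix.posSemidef_conjTranspose_mul_self A).isHermitian.eigenvalues) *
      (star (Matrix.posSemidef_conjTranspose_mul_self A).isHermitian.eigenvectorUnitary :
        Matrix (Fin n) (Fin n) ℂ)).trace.re

namespace Matrix.PosSemidef

/-- The square root of a PSD matrix, via the spectral decomposition. -/
noncomputable def sqrt {n : ℕ} {A : Matrix (Fin n) (Fin n) ℂ} (hA : A.PosSemidef) :
    Matrix (Fin n) (Fin n) ℂ :=
  hA.isHermitian.eigenvectorUnitary.1 *
    Matrix.diagonal ((fun x : ℝ => (x : ℂ)) ∘ Real.sqrt ∘ hA.isHermitian.eigenvalues) *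
    (star hA.isHermitian.eigenvectorUnitary : Matrix (Fin n) (Fin n) ℂ)

open scoped MatrixOrder in
lemma sqrt_eq_cfc' {n : ℕ} {A : Matrix (Fin n) (Fin n) ℂ} (hA : A.PosSemidef) :
    hA.sqrt = CFC.sqrt A := by
  rw [CFC.sqrt_eq_real_sqrt A hA.nonneg, cfcₙ_eq_cfc, hA.1.cfc_eq, Matrix.IsHermitian.cfc,
    Unitary.conjStarAlgAut_apply]
  rfl

open scoped MatrixOrder in
lemma posSemidef_sqrt {n : ℕ} {A : Matrix (Fin n) (Fin n) ℂ} (hA : A.PosSemidef) :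
    hA.sqrt.PosSemidef := by
  rw [sqrt_eq_cfc']; exact Matrix.nonneg_iff_posSemidef.mp (CFC.sqrt_nonneg A)

open scoped MatrixOrder in
lemma sqrt_mul_self {n : ℕ} {A : Matrix (Fin n) (Fin n) ℂ} (hA : A.PosSemidef) :
    hA.sqrt * hA.sqrt = A := by
  rw [sqrt_eq_cfc']; exact CFC.sqrt_mul_sqrt_self A hA.nonneg

open scoped MatrixOrder in
lemma sq_sqrt {n : ℕ} {A : Matrix (Fin n) (Fin n) ℂ} (hA : A.PosSemidef) :
    hA.sqrt ^ 2 = A := by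
  rw [sqrt_eq_cfc']; exact CFC.sq_sqrt A hA.nonneg

open scoped MatrixOrder in
lemma eq_sqrt_of_sq_eq {n : ℕ} {A : Matrix (Fin n) (Fin n) ℂ} (hA : A.PosSemidef)
    {B : Matrix (Fin n) (Fin n) ℂ} (hB : B.PosSemidef) (hAB : A ^ 2 = B) : A = hB.sqrt := by
  rw [sqrt_eq_cfc', eq_comm, CFC.sqrt_eq_iff B A hB.nonneg hA.nonneg, ← hAB, pow_two]

end Matrix.PosSemidef

namespace Aux

variable {n : ℕ}

lemma psd_entry_nonneg {A : Matrix (Fin n) (Fin n) ℂ} (hA : A.PosSemidef) (i : Fin n) :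
    0 ≤ A i i := by
  exact hA.diag_nonneg

lemma psd_trace_re_nonneg {A : Matrix (Fin n) (Fin n) ℂ} (hA : A.PosSemidef) :
    0 ≤ A.trace.re := by
  have : ∀ i, 0 ≤ (A i i).re := fun i => (Complex.le_def.mp (psd_entry_nonneg hA i)).1
  simpa [Matrix.trace, Matrix.diag, Complex.re_sum] using Finset.sum_nonneg fun i _ => this i

/-- If `AᴴA = S^2` with `S` PSD then `traceNorm A = Re (Tr S)`. -/
lemma traceNorm_eq_trace_sqrt {A S : Matrix (Fin n) (Fin n) ℂ} (hS : S.PosSemidef)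
    (h : Aᴴ * A = S ^ 2) : traceNorm A = S.trace.re := by
  have : S = (Matrix.posSemidef_conjTranspose_mul_self A).sqrt :=
    hS.eq_sqrt_of_sq_eq _ h.symm
  rw [traceNorm, this]; rfl

lemma traceNorm_nonneg (A : Matrix (Fin n) (Fin n) ℂ) : 0 ≤ traceNorm A :=
  psd_trace_re_nonneg (Matrix.PosSemidef.posSemidef_sqrt (Matrix.posSemidef_conjTranspose_mul_self A))

lemma sqrt_trace_eq (A : Matrix (Fin n) (Fin n) ℂ) :
    ((Matrix.posSemidef_conjTranspose_mul_self A).sqrt).trace.re = traceNorm A := rfl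

lemma traceNorm_eq_of {A B : Matrix (Fin n) (Fin n) ℂ} (h : Aᴴ * A = Bᴴ * B) :
    traceNorm A = traceNorm B := by
  refine traceNorm_eq_trace_sqrt (Matrix.PosSemidef.posSemidef_sqrt (Matrix.posSemidef_conjTranspose_mul_self B)) ?_
  rw [h]; exact (Matrix.PosSemidef.sq_sqrt (Matrix.posSemidef_conjTranspose_mul_self B)).symm

lemma traceNorm_zero : traceNorm (0 : Matrix (Fin n) (Fin n) ℂ) = 0 := by
  have : traceNorm (0 : Matrix (Fin n) (Fin n) ℂ) =
      (0 : Matrix (Fin n) (Fin n) ℂ).trace.re :=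
    traceNorm_eq_trace_sqrt Matrix.PosSemidef.zero (by simp)
  simpa using this

lemma traceNorm_unitary_left {U A : Matrix (Fin n) (Fin n) ℂ} (hU : Uᴴ * U = 1) :
    traceNorm (U * A) = traceNorm A := by
  refine traceNorm_eq_of ?_
  rw [Matrix.conjTranspose_mul, Matrix.mul_assoc, ← Matrix.mul_assoc Uᴴ, hU, Matrix.one_mul]

lemma traceNorm_unitary_right {U A : Matrix (Fin n) (Fin n) ℂ} (hU : Uᴴ * U = 1) :
    traceNorm (A * U) = traceNorm A := by
  have hU' : U * Uᴴ = 1 := mul_eq_one_comm.mp hU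
  set S := (Matrix.posSemidef_conjTranspose_mul_self A).sqrt with hSdef
  have hS : S.PosSemidef := Matrix.PosSemidef.posSemidef_sqrt _
  have hsq : (A * U)ᴴ * (A * U) = (Uᴴ * S * U) ^ 2 := by
    have h1 : S ^ 2 = Aᴴ * A := Matrix.PosSemidef.sq_sqrt _
    rw [pow_two, Matrix.conjTranspose_mul]
    calc Uᴴ * Aᴴ * (A * U) = Uᴴ * (Aᴴ * A) * U := by
          simp only [Matrix.mul_assoc]
      _ = Uᴴ * (S * (U * Uᴴ) * S) * U := by rw [hU', Matrix.mul_one, ← pow_two, h1]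
      _ = Uᴴ * S * U * (Uᴴ * S * U) := by simp only [Matrix.mul_assoc]
  have hpsd : (Uᴴ * S * U).PosSemidef := hS.conjTranspose_mul_mul_same U
  rw [traceNorm_eq_trace_sqrt hpsd hsq]
  rw [Matrix.trace_mul_cycle, hU', Matrix.one_mul]
  rfl

lemma traceNorm_conj_unitary {U A : Matrix (Fin n) (Fin n) ℂ} (hU : Uᴴ * U = 1) :
    traceNorm (U * A * Uᴴ) = traceNorm A := by
  have hU' : (Uᴴ)ᴴ * Uᴴ = 1 := by
    rw [Matrix.conjTranspose_conjTranspose]; exact mul_eq_one_comm.mp hU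
  rw [Matrix.mul_assoc, traceNorm_unitary_left hU, traceNorm_unitary_right hU']

lemma traceNorm_smul {A : Matrix (Fin n) (Fin n) ℂ} {c : ℝ} (hc : 0 ≤ c) :
    traceNorm ((c : ℂ) • A) = c * traceNorm A := by
  set S := (Matrix.posSemidef_conjTranspose_mul_self A).sqrt with hSdef
  have hS : S.PosSemidef := Matrix.PosSemidef.posSemidef_sqrt _
  have hpsd : ((c : ℂ) • S).PosSemidef := by
    refine Matrix.PosSemidef.of_dotProduct_mulVec_nonneg ?_ fun x => ?_
    · unfold Matrix.IsHermitian
      rw [Matrix.conjTranspose_smul, hS.1]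
      congr 1
      simp
    · rw [Matrix.smul_mulVec, dotProduct_smul]
      exact mul_nonneg (by exact_mod_cast Complex.zero_le_real.mpr hc) (hS.dotProduct_mulVec_nonneg x)
  have hsq : ((c : ℂ) • A)ᴴ * ((c : ℂ) • A) = ((c : ℂ) • S) ^ 2 := by
    have h1 : S * S = Aᴴ * A := Matrix.PosSemidef.sqrt_mul_self _
    rw [Matrix.conjTranspose_smul, Matrix.smul_mul, Matrix.mul_smul, smul_smul,
      pow_two, Matrix.smul_mul, Matrix.mul_smul, smul_smul, h1]
    congr 1
    simp [Complex.star_def, Complex.conj_ofReal, pow_two]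
  rw [traceNorm_eq_trace_sqrt hpsd hsq, Matrix.trace_smul]
  rw [show ((c:ℂ) • S.trace).re = c * S.trace.re by
    simp [Complex.real_smul, Complex.mul_re]]
  rfl


lemma trace_conjTranspose_mul_self_re (X : Matrix (Fin n) (Fin n) ℂ) :
    (Xᴴ * X).trace.re = ∑ i, ∑ j, ‖X i j‖ ^ 2 := by
  simp only [Matrix.trace, Matrix.diag, Matrix.mul_apply, Matrix.conjTranspose_apply,
    Complex.re_sum]
  rw [Finset.sum_comm]
  congr 1; ext i; congr 1; ext j
  simp [← Complex.normSq_eq_norm_sq, Complex.normSq_apply, Complex.mul_re, Complex.sq_norm]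

/-- Cauchy–Schwarz for the Frobenius inner product. -/
lemma frobenius_cs (X Y : Matrix (Fin n) (Fin n) ℂ) :
    ‖(Xᴴ * Y).trace‖ ≤
      Real.sqrt ((Xᴴ * X).trace.re) * Real.sqrt ((Yᴴ * Y).trace.re) := by
  classical
  let v : Matrix (Fin n) (Fin n) ℂ → EuclideanSpace ℂ (Fin n × Fin n) :=
    fun M => WithLp.toLp 2 (fun q : Fin n × Fin n => M q.1 q.2)
  have hinner : ∀ M N : Matrix (Fin n) (Fin n) ℂ,
      (inner ℂ (v M) (v N) : ℂ) = (Mᴴ * N).trace := by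
    intro M N
    have h1 : (inner ℂ (v M) (v N) : ℂ) =
        ∑ q : Fin n × Fin n, (starRingEnd ℂ) (M q.1 q.2) * (N q.1 q.2) := by
      simp [PiLp.inner_apply, RCLike.inner_apply, v, mul_comm]
    rw [h1, Fintype.sum_prod_type]
    simp only [Matrix.trace, Matrix.diag, Matrix.mul_apply, Matrix.conjTranspose_apply]
    rw [Finset.sum_comm]
    rfl
  have hnorm : ∀ M : Matrix (Fin n) (Fin n) ℂ, ‖v M‖ = Real.sqrt ((Mᴴ * M).trace.re) := by
    intro M
    rw [@norm_eq_sqrt_re_inner ℂ, hinner]; rfl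
  calc ‖(Xᴴ * Y).trace‖ = ‖(inner ℂ (v X) (v Y) : ℂ)‖ := by
        rw [hinner]
    _ ≤ ‖v X‖ * ‖v Y‖ := norm_inner_le_norm _ _
    _ = _ := by rw [hnorm, hnorm]



variable {n : ℕ}

lemma polar (B : Matrix (Fin n) (Fin n) ℂ) :
    ∃ W : Matrix (Fin n) (Fin n) ℂ,
      B = W * (Matrix.posSemidef_conjTranspose_mul_self B).sqrt ∧
      (1 - Wᴴ * W).PosSemidef ∧
      Wᴴ * W * (Matrix.posSemidef_conjTranspose_mul_self B).sqrt
        = (Matrix.posSemidef_conjTranspose_mul_self B).sqrt := by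
  classical
  set S := (Matrix.posSemidef_conjTranspose_mul_self B).sqrt with hSdef
  have hS : S.PosSemidef := Matrix.PosSemidef.posSemidef_sqrt _
  have hH : S.IsHermitian := hS.1
  set V : Matrix (Fin n) (Fin n) ℂ := (hH.eigenvectorUnitary : Matrix (Fin n) (Fin n) ℂ)
    with hVdef
  set μ : Fin n → ℝ := hH.eigenvalues with hμdef
  have hμ : ∀ i, 0 ≤ μ i := hS.eigenvalues_nonneg
  have hVV : V * Vᴴ = 1 := by
    simpa [Matrix.star_eq_conjTranspose] using
      (Matrix.mem_unitaryGroup_iff).mp (hH.eigenvectorUnitary).2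
  have hVV' : Vᴴ * V = 1 := by
    simpa [Matrix.star_eq_conjTranspose] using
      (Matrix.mem_unitaryGroup_iff').mp (hH.eigenvectorUnitary).2
  set d : Matrix (Fin n) (Fin n) ℂ := Matrix.diagonal (fun i => (μ i : ℂ)) with hddef
  have hspec : S = V * d * Vᴴ := by
    have h := hH.spectral_theorem
    rw [Unitary.conjStarAlgAut_apply] at h
    exact h
  set g : Fin n → ℂ := fun i => if μ i = 0 then 0 else ((μ i : ℂ))⁻¹ with hgdef
  set e : Fin n → ℂ := fun i => if μ i = 0 then 0 else 1 with hedef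
  set W : Matrix (Fin n) (Fin n) ℂ := B * (V * Matrix.diagonal g * Vᴴ) with hWdef
  have hBB : Bᴴ * B = V * (d * d) * Vᴴ := by
    have h1 : S * S = Bᴴ * B := Matrix.PosSemidef.sqrt_mul_self _
    rw [← h1, hspec]
    calc V * d * Vᴴ * (V * d * Vᴴ)
        = V * d * (Vᴴ * V) * d * Vᴴ := by simp only [Matrix.mul_assoc]
      _ = V * (d * d) * Vᴴ := by rw [hVV']; simp only [Matrix.mul_one, Matrix.mul_assoc]
  set C : Matrix (Fin n) (Fin n) ℂ := B * V with hCdef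
  have hCC : Cᴴ * C = d * d := by
    rw [hCdef, Matrix.conjTranspose_mul]
    calc Vᴴ * Bᴴ * (B * V) = Vᴴ * (Bᴴ * B) * V := by simp only [Matrix.mul_assoc]
      _ = (Vᴴ * V) * (d * d) * (Vᴴ * V) := by rw [hBB]; simp only [Matrix.mul_assoc]
      _ = d * d := by rw [hVV', Matrix.one_mul, Matrix.mul_one]
  have hcol : ∀ i, μ i = 0 → ∀ k, C k i = 0 := by
    intro i hi k
    have h0 : (Cᴴ * C) i i = 0 := by
      rw [hCC, hddef, Matrix.diagonal_mul_diagonal, Matrix.diagonal_apply_eq]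
      simp [hi]
    rw [Matrix.mul_apply] at h0
    simp only [Matrix.conjTranspose_apply] at h0
    have hterm : ∀ j ∈ Finset.univ, (0:ℂ) ≤ star (C j i) * C j i :=
      fun j _ => star_mul_self_nonneg _
    have h2 := (Finset.sum_eq_zero_iff_of_nonneg hterm).mp h0 k (Finset.mem_univ k)
    rcases mul_eq_zero.mp h2 with h | h
    · simpa using congrArg star h
    · exact h
  have hCe : C * Matrix.diagonal e = C := by
    ext k i
    rw [Matrix.mul_diagonal]
    by_cases hi : μ i = 0
    · rw [hcol i hi k]; ring
    · simp [hedef, hi]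
  have hW1 : W * S = B := by
    rw [hWdef, hspec]
    have : B * (V * Matrix.diagonal g * Vᴴ) * (V * d * Vᴴ)
        = (B * V) * (Matrix.diagonal g * d) * Vᴴ := by
      calc B * (V * Matrix.diagonal g * Vᴴ) * (V * d * Vᴴ)
          = B * V * Matrix.diagonal g * (Vᴴ * V) * d * Vᴴ := by simp only [Matrix.mul_assoc]
        _ = (B * V) * (Matrix.diagonal g * d) * Vᴴ := by
            rw [hVV']; simp only [Matrix.mul_one, Matrix.mul_assoc]
    rw [this, hddef, Matrix.diagonal_mul_diagonal]
    have hgd : (fun i => g i * (μ i : ℂ)) = e := by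
      funext i
      by_cases hi : μ i = 0
      · simp [hgdef, hedef, hi]
      · have : (μ i : ℂ) ≠ 0 := Complex.ofReal_ne_zero.mpr hi
        simp only [hgdef, hedef, hi, ↓reduceIte]; field_simp
    rw [hgd, ← hCdef, hCe, hCdef, Matrix.mul_assoc, hVV, Matrix.mul_one]
  have hgstar : star g = g := by
    funext i
    by_cases hi : μ i = 0 <;> simp [hgdef, hi, ← Complex.ofReal_inv]
  have hWW : Wᴴ * W = V * Matrix.diagonal e * Vᴴ := by
    have hWt : Wᴴ = V * Matrix.diagonal g * Vᴴ * Bᴴ := by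
      rw [hWdef, Matrix.conjTranspose_mul, Matrix.conjTranspose_mul, Matrix.conjTranspose_mul,
        Matrix.conjTranspose_conjTranspose, Matrix.diagonal_conjTranspose, hgstar]
      simp only [Matrix.mul_assoc]
    rw [hWt, hWdef]
    calc V * Matrix.diagonal g * Vᴴ * Bᴴ * (B * (V * Matrix.diagonal g * Vᴴ))
        = V * Matrix.diagonal g * (Vᴴ * (Bᴴ * B) * V) * Matrix.diagonal g * Vᴴ := by
          simp only [Matrix.mul_assoc]
      _ = V * Matrix.diagonal g * (d * d) * Matrix.diagonal g * Vᴴ := by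
          rw [hBB]
          calc V * Matrix.diagonal g * (Vᴴ * (V * (d * d) * Vᴴ) * V) * Matrix.diagonal g * Vᴴ
              = V * Matrix.diagonal g * ((Vᴴ * V) * (d * d) * (Vᴴ * V)) * Matrix.diagonal g * Vᴴ := by
                simp only [Matrix.mul_assoc]
            _ = _ := by rw [hVV', Matrix.one_mul, Matrix.mul_one]
      _ = V * (Matrix.diagonal g * (d * d) * Matrix.diagonal g) * Vᴴ := by
          simp only [Matrix.mul_assoc]
      _ = V * Matrix.diagonal e * Vᴴ := by
          have hdd : Matrix.diagonal g * (d * d) * Matrix.diagonal g = Matrix.diagonal e := by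
            rw [hddef, Matrix.diagonal_mul_diagonal, Matrix.diagonal_mul_diagonal,
              Matrix.diagonal_mul_diagonal]
            refine congrArg Matrix.diagonal (funext fun i => ?_)
            by_cases hi : μ i = 0
            · simp [hgdef, hedef, hi]
            · have h0 : (μ i : ℂ) ≠ 0 := Complex.ofReal_ne_zero.mpr hi
              simp only [hgdef, hedef, hi, ↓reduceIte]; field_simp
          rw [hdd]
  refine ⟨W, hW1.symm, ?_, ?_⟩
  · have h1e : (1 : Matrix (Fin n) (Fin n) ℂ) - Wᴴ * W
        = V * Matrix.diagonal (fun i => 1 - e i) * Vᴴ := by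
      rw [hWW]
      have : Matrix.diagonal (fun i => (1:ℂ) - e i) = 1 - Matrix.diagonal e := by
        rw [← Matrix.diagonal_one, ← Matrix.diagonal_sub]
      rw [this, Matrix.mul_sub, Matrix.sub_mul, Matrix.mul_one, hVV]
    rw [h1e]
    have hdiag : (Matrix.diagonal (fun i => (1:ℂ) - e i)).PosSemidef := by
      refine Matrix.PosSemidef.diagonal (Pi.le_def.mpr fun i => ?_)
      by_cases hi : μ i = 0 <;> simp [hedef, hi]
    exact hdiag.mul_mul_conjTranspose_same V
  · rw [hWW, hspec]
    calc V * Matrix.diagonal e * Vᴴ * (V * d * Vᴴ)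
        = V * (Matrix.diagonal e * (Vᴴ * V) * d) * Vᴴ := by simp only [Matrix.mul_assoc]
      _ = V * (Matrix.diagonal e * d) * Vᴴ := by
          rw [hVV']; simp only [Matrix.mul_one, Matrix.mul_assoc]
      _ = V * d * Vᴴ := by
          rw [hddef, Matrix.diagonal_mul_diagonal]
          have hfun : Matrix.diagonal (fun i => e i * (μ i : ℂ)) = d := by
            rw [hddef]
            refine congrArg Matrix.diagonal (funext fun i => ?_)
            by_cases hi : μ i = 0
            · simp [hedef, hi]
            · simp [hedef, hi]
          rw [hfun]

lemma trace_mul_psd_re_nonneg {P Q : Matrix (Fin n) (Fin n) ℂ}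
    (hP : P.PosSemidef) (hQ : Q.PosSemidef) : 0 ≤ (P * Q).trace.re := by
  set R := hP.sqrt with hRdef
  have hR : R.PosSemidef := hP.posSemidef_sqrt
  have hRR : R * R = P := hP.sqrt_mul_self
  have h1 : (P * Q).trace = (R * Q * R).trace := by
    rw [← hRR, Matrix.mul_assoc, Matrix.trace_mul_comm R (R * Q), Matrix.mul_assoc]
  have h2 : (R * Q * R).PosSemidef := by
    have := hQ.mul_mul_conjTranspose_same R
    rwa [hR.1] at this
  rw [h1]
  exact psd_trace_re_nonneg h2

lemma abs_trace_contraction_mul_le {W : Matrix (Fin n) (Fin n) ℂ}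
    (hW : (1 - Wᴴ * W).PosSemidef) (B : Matrix (Fin n) (Fin n) ℂ) :
    ‖(Wᴴ * B).trace‖ ≤ traceNorm B := by
  obtain ⟨Q, hBQ, hQcon, hQproj⟩ := polar B
  set S := (Matrix.posSemidef_conjTranspose_mul_self B).sqrt with hSdef
  have hS : S.PosSemidef := Matrix.PosSemidef.posSemidef_sqrt _
  set R := hS.sqrt with hRdef
  have hR : R.PosSemidef := hS.posSemidef_sqrt
  have hRH : Rᴴ = R := hR.1
  have hRR : R * R = S := hS.sqrt_mul_self
  have hTS : 0 ≤ S.trace.re := psd_trace_re_nonneg hS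
  -- Tr(Wᴴ B) = Tr((W R)ᴴ (Q R))
  have hkey : (Wᴴ * B).trace = ((W * R)ᴴ * (Q * R)).trace := by
    rw [Matrix.conjTranspose_mul, hRH, hBQ]
    calc (Wᴴ * (Q * S)).trace = (Wᴴ * Q * (R * R)).trace := by
          rw [← hRR]; simp only [Matrix.mul_assoc]
      _ = ((Wᴴ * Q * R) * R).trace := by simp only [Matrix.mul_assoc]
      _ = (R * (Wᴴ * Q * R)).trace := Matrix.trace_mul_comm _ _
      _ = (R * Wᴴ * (Q * R)).trace := by simp only [Matrix.mul_assoc]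
  -- bounds on the two Gram traces
  have hbound : ∀ X : Matrix (Fin n) (Fin n) ℂ, (1 - Xᴴ * X).PosSemidef →
      ((X * R)ᴴ * (X * R)).trace.re ≤ S.trace.re := by
    intro X hX
    have h1 : ((X * R)ᴴ * (X * R)).trace = ((Xᴴ * X) * S).trace := by
      rw [Matrix.conjTranspose_mul, hRH]
      calc (R * Xᴴ * (X * R)).trace = (R * (Xᴴ * X * R)).trace := by
            simp only [Matrix.mul_assoc]
        _ = ((Xᴴ * X * R) * R).trace := Matrix.trace_mul_comm _ _
        _ = ((Xᴴ * X) * S).trace := by rw [← hRR]; simp only [Matrix.mul_assoc]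
    have h2 : 0 ≤ (((1 : Matrix (Fin n) (Fin n) ℂ) - Xᴴ * X) * S).trace.re :=
      trace_mul_psd_re_nonneg hX hS
    rw [Matrix.sub_mul, Matrix.trace_sub, Complex.sub_re, Matrix.one_mul] at h2
    rw [h1]
    linarith
  calc ‖(Wᴴ * B).trace‖
      = ‖((W * R)ᴴ * (Q * R)).trace‖ := by rw [hkey]
    _ ≤ Real.sqrt (((W * R)ᴴ * (W * R)).trace.re) *
          Real.sqrt (((Q * R)ᴴ * (Q * R)).trace.re) := frobenius_cs _ _
    _ ≤ Real.sqrt (S.trace.re) * Real.sqrt (S.trace.re) := by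
        gcongr Real.sqrt ?_ * Real.sqrt ?_
        · exact hbound W hW
        · exact hbound Q hQcon
    _ = S.trace.re := Real.mul_self_sqrt hTS
    _ = traceNorm B := rfl

lemma traceNorm_add_le (A B : Matrix (Fin n) (Fin n) ℂ) :
    traceNorm (A + B) ≤ traceNorm A + traceNorm B := by
  obtain ⟨W, hW1, hWcon, hWproj⟩ := polar (A + B)
  set S := (Matrix.posSemidef_conjTranspose_mul_self (A + B)).sqrt with hSdef
  have htr : traceNorm (A + B) = (Wᴴ * (A + B)).trace.re := by
    have : Wᴴ * (A + B) = Wᴴ * W * S := by rw [hW1]; simp only [Matrix.mul_assoc]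
    rw [this, hWproj]
    rfl
  rw [htr, Matrix.mul_add, Matrix.trace_add, Complex.add_re]
  have h1 : (Wᴴ * A).trace.re ≤ traceNorm A :=
    le_trans (Complex.re_le_norm _) (abs_trace_contraction_mul_le hWcon A)
  have h2 : (Wᴴ * B).trace.re ≤ traceNorm B :=
    le_trans (Complex.re_le_norm _) (abs_trace_contraction_mul_le hWcon B)
  linarith

lemma traceNorm_sum_le {ι : Type*} (s : Finset ι) (f : ι → Matrix (Fin n) (Fin n) ℂ) :
    traceNorm (∑ i ∈ s, f i) ≤ ∑ i ∈ s, traceNorm (f i) := by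
  classical
  induction s using Finset.induction_on with
  | empty => simp [traceNorm_zero]
  | insert _ _ h ih =>
      rw [Finset.sum_insert h, Finset.sum_insert h]
      exact le_trans (traceNorm_add_le _ _) (by linarith)

noncomputable def enorm {n : ℕ} (v : Fin n → ℂ) : ℝ := Real.sqrt (∑ i, ‖v i‖ ^ 2)

lemma enorm_nonneg (v : Fin n → ℂ) : 0 ≤ enorm v := Real.sqrt_nonneg _

lemma star_mul_self' (z : ℂ) : star z * z = ((‖z‖ ^ 2 : ℝ) : ℂ) := by
  rw [Complex.star_def, ← Complex.normSq_eq_conj_mul_self]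
  rw [Complex.normSq_eq_norm_sq]

lemma dot_star_self (v : Fin n → ℂ) :
    dotProduct (star v) v = ((∑ i, ‖v i‖ ^ 2 : ℝ) : ℂ) := by
  simp only [dotProduct, Pi.star_apply, star_mul_self']
  push_cast
  rfl

lemma vecMulVec_mul_vecMulVec (x y z w : Fin n → ℂ) :
    Matrix.vecMulVec x (star y) * Matrix.vecMulVec z (star w)
      = (dotProduct (star y) z) • Matrix.vecMulVec x (star w) := by
  ext i j
  simp only [Matrix.mul_apply, Matrix.vecMulVec_apply, Matrix.smul_apply, smul_eq_mul,
    dotProduct, Pi.star_apply]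
  calc ∑ k, x i * star (y k) * (z k * star (w j))
      = ∑ k, (star (y k) * z k) * (x i * star (w j)) :=
        Finset.sum_congr rfl fun k _ => by ring
    _ = (∑ k, star (y k) * z k) * (x i * star (w j)) := (Finset.sum_mul _ _ _).symm

lemma vecMulVec_conjTranspose (a b : Fin n → ℂ) :
    (Matrix.vecMulVec a (star b))ᴴ = Matrix.vecMulVec b (star a) := by
  ext i j
  simp [Matrix.vecMulVec_apply, Matrix.conjTranspose_apply, mul_comm]

lemma vecMulVec_posSemidef (b : Fin n → ℂ) :
    (Matrix.vecMulVec b (star b)).PosSemidef := by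
  refine Matrix.PosSemidef.of_dotProduct_mulVec_nonneg ?_ ?_
  · rw [Matrix.IsHermitian, vecMulVec_conjTranspose]
  · intro x
    set s : ℂ := ∑ j, star (b j) * x j with hsdef
    have hdot : dotProduct (star x) (Matrix.vecMulVec b (star b) *ᵥ x) = star s * s := by
      simp only [dotProduct, Matrix.mulVec, Matrix.vecMulVec_apply, Pi.star_apply]
      calc ∑ i, star (x i) * (∑ j, b i * star (b j) * x j)
          = ∑ i, ∑ j, (b i * star (x i)) * (star (b j) * x j) := by
            refine Finset.sum_congr rfl fun i _ => ?_
            rw [Finset.mul_sum]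
            exact Finset.sum_congr rfl fun j _ => by ring
        _ = (∑ i, b i * star (x i)) * (∑ j, star (b j) * x j) := by
            rw [Finset.sum_mul_sum]
        _ = star s * s := by
            rw [hsdef, star_sum]
            congr 1
            exact Finset.sum_congr rfl fun i _ => by
              rw [star_mul, star_star, mul_comm]
    rw [hdot]
    exact star_mul_self_nonneg _

lemma trace_vecMulVec (b : Fin n → ℂ) :
    (Matrix.vecMulVec b (star b)).trace = ((∑ i, ‖b i‖ ^ 2 : ℝ) : ℂ) := by
  simp only [Matrix.trace, Matrix.diag, Matrix.vecMulVec_apply, Pi.star_apply]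
  rw [Finset.sum_congr rfl fun i (_ : i ∈ Finset.univ) =>
    (by rw [mul_comm]; exact star_mul_self' (b i) : b i * star (b i) = ((‖b i‖ ^ 2 : ℝ) : ℂ))]
  push_cast
  rfl

lemma psd_smul {S : Matrix (Fin n) (Fin n) ℂ} (hS : S.PosSemidef) {c : ℝ} (hc : 0 ≤ c) :
    ((c : ℂ) • S).PosSemidef := by
  refine Matrix.PosSemidef.of_dotProduct_mulVec_nonneg ?_ fun x => ?_
  · unfold Matrix.IsHermitian
    rw [Matrix.conjTranspose_smul, hS.1]
    congr 1
    simp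
  · rw [Matrix.smul_mulVec, dotProduct_smul]
    exact mul_nonneg (by exact_mod_cast Complex.zero_le_real.mpr hc) (hS.dotProduct_mulVec_nonneg x)

lemma traceNorm_vecMulVec (a b : Fin n → ℂ) :
    traceNorm (Matrix.vecMulVec a (star b)) = enorm a * enorm b := by
  classical
  by_cases hb : b = 0
  · subst hb
    have h0 : Matrix.vecMulVec a (star (0 : Fin n → ℂ)) = 0 := by
      ext i j; simp [Matrix.vecMulVec_apply]
    rw [h0, traceNorm_zero]
    simp [enorm]
  · set na := ∑ i, ‖a i‖ ^ 2 with hnadef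
    set nb := ∑ i, ‖b i‖ ^ 2 with hnbdef
    have hna : 0 ≤ na := Finset.sum_nonneg fun i _ => sq_nonneg _
    have hnb : 0 < nb := by
      obtain ⟨i, hi⟩ := Function.ne_iff.mp hb
      refine Finset.sum_pos' (fun j _ => sq_nonneg _) ⟨i, Finset.mem_univ i, ?_⟩
      simpa using pow_pos (norm_pos_iff.mpr hi) 2
    set c : ℝ := Real.sqrt na / Real.sqrt nb with hcdef
    have hc : 0 ≤ c := div_nonneg (Real.sqrt_nonneg _) (Real.sqrt_nonneg _)
    have hcc : c * (c * nb) = na := by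
      have e1 : Real.sqrt nb ≠ 0 := ne_of_gt (Real.sqrt_pos.mpr hnb)
      rw [hcdef]
      have h4 : (Real.sqrt na / Real.sqrt nb) * ((Real.sqrt na / Real.sqrt nb) * nb)
          = (Real.sqrt na * Real.sqrt na) * (nb / (Real.sqrt nb * Real.sqrt nb)) := by ring
      rw [h4, Real.mul_self_sqrt hna, Real.mul_self_sqrt hnb.le, div_self (ne_of_gt hnb), mul_one]
    have hsq : (Matrix.vecMulVec a (star b))ᴴ * (Matrix.vecMulVec a (star b))
        = ((c : ℂ) • Matrix.vecMulVec b (star b)) ^ 2 := by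
      rw [vecMulVec_conjTranspose, vecMulVec_mul_vecMulVec, dot_star_self]
      rw [pow_two, Matrix.smul_mul, Matrix.mul_smul, vecMulVec_mul_vecMulVec,
        dot_star_self, smul_smul, smul_smul]
      congr 1
      rw [show ((∑ i, ‖a i‖ ^ 2 : ℝ) : ℂ) = ((na : ℝ) : ℂ) from by rw [hnadef],
        show ((∑ i, ‖b i‖ ^ 2 : ℝ) : ℂ) = ((nb : ℝ) : ℂ) from by rw [hnbdef], ← hcc]
      push_cast
      ring
    have hpsd : ((c : ℂ) • Matrix.vecMulVec b (star b)).PosSemidef :=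
      psd_smul (vecMulVec_posSemidef b) hc
    rw [traceNorm_eq_trace_sqrt hpsd hsq, Matrix.trace_smul, trace_vecMulVec]
    have h2 : ((c:ℂ) • ((nb : ℝ) : ℂ)).re = c * nb := by
      rw [smul_eq_mul, ← Complex.ofReal_mul, Complex.ofReal_re]
    rw [h2]
    have h3 : c * nb = Real.sqrt na * Real.sqrt nb := by
      have e1 : Real.sqrt nb ≠ 0 := ne_of_gt (Real.sqrt_pos.mpr hnb)
      rw [hcdef]
      field_simp
      rw [Real.sq_sqrt hnb.le]
    rw [h3]
    rfl

lemma enorm_mulVec_le (A : Matrix (Fin n) (Fin n) ℂ) (x : Fin n → ℂ) :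
    enorm (A *ᵥ x) ≤ opNorm A * enorm x := by
  have h := (Matrix.toEuclideanCLM (𝕜 := ℂ) A).le_opNorm (WithLp.toLp 2 x)
  rw [Matrix.toEuclideanCLM_toLp] at h
  have h1 : ‖WithLp.toLp 2 (A *ᵥ x)‖ = enorm (A *ᵥ x) := by
    rw [EuclideanSpace.norm_eq]; rfl
  have h2 : ‖WithLp.toLp 2 x‖ = enorm x := by
    rw [EuclideanSpace.norm_eq]; rfl
  rw [h1, h2] at h
  exact h

lemma enorm_unitary {U : Matrix (Fin n) (Fin n) ℂ} (hU : Uᴴ * U = 1) (x : Fin n → ℂ) :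
    enorm (U *ᵥ x) = enorm x := by
  have h : dotProduct (star (U *ᵥ x)) (U *ᵥ x) = dotProduct (star x) x := by
    rw [Matrix.star_mulVec, ← Matrix.dotProduct_mulVec, Matrix.mulVec_mulVec, hU,
      Matrix.one_mulVec]
  rw [dot_star_self, dot_star_self] at h
  have := Complex.ofReal_inj.mp h
  rw [enorm, enorm, this]

lemma conj_vecMulVec (M : Matrix (Fin n) (Fin n) ℂ) (ψ : Fin n → ℂ) :
    M * Matrix.vecMulVec ψ (star ψ) * Mᴴ
      = Matrix.vecMulVec (M *ᵥ ψ) (star (M *ᵥ ψ)) := by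
  ext i j
  simp only [Matrix.mul_apply, Matrix.vecMulVec_apply, Matrix.conjTranspose_apply,
    Matrix.mulVec, dotProduct, Pi.star_apply]
  calc ∑ l, (∑ k, M i k * (ψ k * star (ψ l))) * star (M j l)
      = ∑ l, ∑ k, (M i k * ψ k) * (star (ψ l) * star (M j l)) := by
        refine Finset.sum_congr rfl fun l _ => ?_
        rw [Finset.sum_mul]
        exact Finset.sum_congr rfl fun k _ => by ring
    _ = (∑ k, M i k * ψ k) * (∑ l, star (ψ l) * star (M j l)) := by
        rw [Finset.sum_mul_sum]
        exact Finset.sum_comm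
    _ = (∑ k, M i k * ψ k) * star (∑ l, M j l * ψ l) := by
        rw [star_sum]
        congr 1
        exact Finset.sum_congr rfl fun l _ => by rw [star_mul]

end Aux

theorem stmt_5 {n : ℕ} {Ω : Type*} [Fintype Ω]
    (U₀ : Matrix (Fin n) (Fin n) ℂ) (hU₀ : U₀ᴴ * U₀ = 1)
    (U : Ω → Matrix (Fin n) (Fin n) ℂ) (hU : ∀ ω, (U ω)ᴴ * U ω = 1)
    (p : Ω → ℝ) (hp : ∀ ω, 0 ≤ p ω) (hpsum : ∑ ω, p ω = 1)
    (ρ₀ : Matrix (Fin n) (Fin n) ℂ) (hρ₀ : ρ₀.PosSemidef) (hρ₀1 : ρ₀.trace = 1)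
    (ψ₀ : Fin n → ℂ) (hψ₀ : ∑ i, ‖ψ₀ i‖ ^ 2 = 1) :
    traceNorm
        ((∑ ω, (p ω : ℂ) • (U ω * ρ₀ * (U ω)ᴴ)) -
          U₀ * Matrix.vecMulVec ψ₀ (star ψ₀) * U₀ᴴ)
      ≤ traceNorm (ρ₀ - Matrix.vecMulVec ψ₀ (star ψ₀)) +
        2 * opNorm ((∑ ω, (p ω : ℂ) • U ω) - U₀) +
        ∑ ω, p ω * (opNorm (U ω - U₀)) ^ 2 := by
  classical
  open Aux in
  set P := Matrix.vecMulVec ψ₀ (star ψ₀) with hPdef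
  set φ : Ω → (Fin n → ℂ) := fun ω => U ω *ᵥ ψ₀ with hφdef
  set φ₀ : Fin n → ℂ := U₀ *ᵥ ψ₀ with hφ₀def
  set D : Matrix (Fin n) (Fin n) ℂ := (∑ ω, (p ω : ℂ) • U ω) - U₀ with hDdef
  set δ : Fin n → ℂ := D *ᵥ ψ₀ with hδdef
  have hpsum' : ∑ ω, ((p ω : ℝ) : ℂ) = 1 := by
    rw [← Complex.ofReal_sum, hpsum, Complex.ofReal_one]
  have hδ' : δ = (∑ ω, (p ω : ℂ) • φ ω) - φ₀ := by
    rw [hδdef, hDdef, Matrix.sub_mulVec]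
    congr 1
    ext i
    simp only [Matrix.mulVec, dotProduct, Finset.sum_apply, Matrix.sum_apply,
      Pi.smul_apply, Matrix.smul_apply, smul_eq_mul, Finset.sum_mul, hφdef]
    rw [Finset.sum_comm]
    refine Finset.sum_congr rfl fun ω _ => ?_
    rw [Finset.mul_sum]
    exact Finset.sum_congr rfl fun k _ => by ring
  -- decomposition
  have hdecomp :
      (∑ ω, (p ω : ℂ) • (U ω * ρ₀ * (U ω)ᴴ)) - U₀ * P * U₀ᴴ
        = (∑ ω, (p ω : ℂ) • (U ω * (ρ₀ - P) * (U ω)ᴴ))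
          + (Matrix.vecMulVec δ (star φ₀) + Matrix.vecMulVec φ₀ (star δ)
             + ∑ ω, (p ω : ℂ) • Matrix.vecMulVec (φ ω - φ₀) (star (φ ω - φ₀))) := by
    have hsplit : ∀ ω, (p ω : ℂ) • (U ω * ρ₀ * (U ω)ᴴ)
        = (p ω : ℂ) • (U ω * (ρ₀ - P) * (U ω)ᴴ)
          + (p ω : ℂ) • Matrix.vecMulVec (φ ω) (star (φ ω)) := by
      intro ω
      rw [← Aux.conj_vecMulVec (U ω) ψ₀, ← hPdef, ← smul_add]
      congr 1
      rw [Matrix.mul_sub, Matrix.sub_mul]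
      abel
    rw [Finset.sum_congr rfl fun ω _ => hsplit ω, Finset.sum_add_distrib]
    have hU₀P : U₀ * P * U₀ᴴ = Matrix.vecMulVec φ₀ (star φ₀) := by
      rw [hPdef, Aux.conj_vecMulVec]
    rw [hU₀P]
    have hkey2 : (∑ ω, (p ω : ℂ) • Matrix.vecMulVec (φ ω) (star (φ ω)))
        - Matrix.vecMulVec φ₀ (star φ₀)
        = Matrix.vecMulVec δ (star φ₀) + Matrix.vecMulVec φ₀ (star δ)
          + ∑ ω, (p ω : ℂ) • Matrix.vecMulVec (φ ω - φ₀) (star (φ ω - φ₀)) := by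
      ext i j
      have hδi : ∀ i, δ i = (∑ ω, (p ω : ℂ) * φ ω i) - φ₀ i := by
        intro i
        rw [hδ']
        simp [Finset.sum_apply, Pi.smul_apply, smul_eq_mul]
      have hstar : ∀ j, star (δ j) = (∑ ω, (p ω : ℂ) * star (φ ω j)) - star (φ₀ j) := by
        intro j
        rw [hδi j, star_sub, star_sum]
        congr 1
        refine Finset.sum_congr rfl fun ω _ => ?_
        rw [star_mul']
        congr 1
        exact Complex.conj_ofReal _
      simp only [Matrix.sub_apply, Matrix.add_apply, Matrix.sum_apply, Matrix.smul_apply,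
        Matrix.vecMulVec_apply, smul_eq_mul, Pi.star_apply, Pi.sub_apply, hδi i, hstar j,
        star_sub]
      have expand : ∀ ω, (p ω : ℂ) * ((φ ω i - φ₀ i) * (star (φ ω j) - star (φ₀ j)))
          = (p ω : ℂ) * (φ ω i * star (φ ω j)) - ((p ω : ℂ) * φ ω i) * star (φ₀ j)
            - φ₀ i * ((p ω : ℂ) * star (φ ω j)) + (p ω : ℂ) * (φ₀ i * star (φ₀ j)) := by
        intro ω; ring
      rw [Finset.sum_congr rfl fun ω _ => expand ω]
      rw [Finset.sum_add_distrib, Finset.sum_sub_distrib, Finset.sum_sub_distrib,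
        ← Finset.sum_mul, ← Finset.mul_sum, ← Finset.sum_mul, hpsum', one_mul]
      ring
    rw [← hkey2]
    abel
  rw [hdecomp]
  -- now bound each piece
  have hψn : Aux.enorm ψ₀ = 1 := by rw [Aux.enorm, hψ₀, Real.sqrt_one]
  have hφ₀n : Aux.enorm φ₀ = 1 := by rw [hφ₀def, Aux.enorm_unitary hU₀, hψn]
  have hδn : Aux.enorm δ ≤ opNorm D := by
    have := Aux.enorm_mulVec_le D ψ₀
    rwa [hψn, mul_one] at this
  have hT1 : traceNorm (∑ ω, (p ω : ℂ) • (U ω * (ρ₀ - P) * (U ω)ᴴ))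
      ≤ traceNorm (ρ₀ - P) := by
    refine le_trans (Aux.traceNorm_sum_le _ _) ?_
    have : ∀ ω, traceNorm ((p ω : ℂ) • (U ω * (ρ₀ - P) * (U ω)ᴴ))
        = p ω * traceNorm (ρ₀ - P) := by
      intro ω
      rw [Aux.traceNorm_smul (hp ω), Aux.traceNorm_conj_unitary (hU ω)]
    rw [Finset.sum_congr rfl fun ω _ => this ω, ← Finset.sum_mul, hpsum, one_mul]
  have hT2 : traceNorm (Matrix.vecMulVec δ (star φ₀)) ≤ opNorm D := by
    rw [Aux.traceNorm_vecMulVec, hφ₀n, mul_one]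
    exact hδn
  have hT3 : traceNorm (Matrix.vecMulVec φ₀ (star δ)) ≤ opNorm D := by
    rw [Aux.traceNorm_vecMulVec, hφ₀n, one_mul]
    exact hδn
  have hT4 : traceNorm (∑ ω, (p ω : ℂ) • Matrix.vecMulVec (φ ω - φ₀) (star (φ ω - φ₀)))
      ≤ ∑ ω, p ω * (opNorm (U ω - U₀)) ^ 2 := by
    refine le_trans (Aux.traceNorm_sum_le _ _) (Finset.sum_le_sum fun ω _ => ?_)
    rw [Aux.traceNorm_smul (hp ω), Aux.traceNorm_vecMulVec]
    refine mul_le_mul_of_nonneg_left ?_ (hp ω)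
    have hd : φ ω - φ₀ = (U ω - U₀) *ᵥ ψ₀ := by
      rw [Matrix.sub_mulVec, hφdef, hφ₀def]
    rw [hd]
    have h1 : Aux.enorm ((U ω - U₀) *ᵥ ψ₀) ≤ opNorm (U ω - U₀) := by
      have := Aux.enorm_mulVec_le (U ω - U₀) ψ₀
      rwa [hψn, mul_one] at this
    calc Aux.enorm ((U ω - U₀) *ᵥ ψ₀) * Aux.enorm ((U ω - U₀) *ᵥ ψ₀)
        ≤ opNorm (U ω - U₀) * opNorm (U ω - U₀) :=
          mul_le_mul h1 h1 (Aux.enorm_nonneg _) (le_trans (Aux.enorm_nonneg _) h1)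
      _ = (opNorm (U ω - U₀)) ^ 2 := (pow_two _).symm
  calc traceNorm _
      ≤ traceNorm (∑ ω, (p ω : ℂ) • (U ω * (ρ₀ - P) * (U ω)ᴴ))
        + traceNorm (Matrix.vecMulVec δ (star φ₀) + Matrix.vecMulVec φ₀ (star δ)
           + ∑ ω, (p ω : ℂ) • Matrix.vecMulVec (φ ω - φ₀) (star (φ ω - φ₀))) :=
        Aux.traceNorm_add_le _ _
    _ ≤ traceNorm (∑ ω, (p ω : ℂ) • (U ω * (ρ₀ - P) * (U ω)ᴴ))
        + (traceNorm (Matrix.vecMulVec δ (star φ₀) + Matrix.vecMulVec φ₀ (star δ))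
           + traceNorm (∑ ω, (p ω : ℂ) • Matrix.vecMulVec (φ ω - φ₀) (star (φ ω - φ₀)))) := by
        gcongr
        exact Aux.traceNorm_add_le _ _
    _ ≤ traceNorm (∑ ω, (p ω : ℂ) • (U ω * (ρ₀ - P) * (U ω)ᴴ))
        + ((traceNorm (Matrix.vecMulVec δ (star φ₀))
            + traceNorm (Matrix.vecMulVec φ₀ (star δ)))
           + traceNorm (∑ ω, (p ω : ℂ) • Matrix.vecMulVec (φ ω - φ₀) (star (φ ω - φ₀)))) := by
        gcongr
        exact Aux.traceNorm_add_le _ _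
    _ ≤ traceNorm (ρ₀ - P) + ((opNorm D + opNorm D)
          + ∑ ω, p ω * (opNorm (U ω - U₀)) ^ 2) := by
        gcongr
    _ = traceNorm (ρ₀ - P) + 2 * opNorm D + ∑ ω, p ω * (opNorm (U ω - U₀)) ^ 2 := by
        ring
end

section
/- Let x : Fin N → ℝ with 0 ≤ xᵢ ≤ 1 and ∑ xᵢ = 2, and suppose x is a critical point of S = ∑_{i<j<k, 2|(k−i), 2∤(j−i)} xᵢxⱼxₖ subject to the constraint ∑ xᵢ = 2 with all xᵢ > 0 (i.e., all partial derivatives ∂S/∂xᵢ are equal). If N is odd then x₁ = x₂ = ⋯ = x_N = 2/N. -/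
/-- The partial derivative `∂S/∂xᵢ` of
`S = ∑_{i<j<k, 2∣(k−i), 2∤(j−i)} xᵢxⱼxₖ`, written combinatorially: the sum
over ways of completing `i` into a valid triple (as first, middle or last index). -/
def Spartial {N : ℕ} (x : Fin N → ℝ) (i : Fin N) : ℝ :=
  (∑ j : Fin N, ∑ k : Fin N,
      if i < j ∧ j < k ∧ (k.val - i.val) % 2 = 0 ∧ (j.val - i.val) % 2 = 1
      then x j * x k else 0) +
  (∑ j : Fin N, ∑ k : Fin N,
      if j < i ∧ i < k ∧ (k.val - j.val) % 2 = 0 ∧ (i.val - j.val) % 2 = 1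
      then x j * x k else 0) +
  (∑ j : Fin N, ∑ k : Fin N,
      if j < k ∧ k < i ∧ (i.val - j.val) % 2 = 0 ∧ (k.val - j.val) % 2 = 1
      then x j * x k else 0)


open Finset

def yy (N : ℕ) (x : Fin N → ℝ) : ℕ → ℝ := fun t => if h : t < N then x ⟨t, h⟩ else 0

def AA (N : ℕ) (x : Fin N → ℝ) (m : ℕ) : ℝ :=
  ∑ t ∈ range m, if (t + m) % 2 = 1 then yy N x t else 0

def BB (N : ℕ) (x : Fin N → ℝ) (m : ℕ) : ℝ :=
  ∑ t ∈ range N, if m < t ∧ (t + m) % 2 = 1 then yy N x t else 0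

def CC (N : ℕ) (x : Fin N → ℝ) (m : ℕ) : ℝ := ∑ t ∈ range m, yy N x t

def SS1 (N : ℕ) (x : Fin N → ℝ) (m : ℕ) : ℝ :=
  ∑ j ∈ range m, if (j + m) % 2 = 1 then yy N x j * AA N x j else 0

def SS2 (N : ℕ) (x : Fin N → ℝ) (m : ℕ) : ℝ :=
  ∑ j ∈ range N, if m < j ∧ (j + m) % 2 = 1 then yy N x j * BB N x j else 0

def SP (N : ℕ) (x : Fin N → ℝ) (m : ℕ) : ℝ :=
  (∑ j ∈ range N, ∑ k ∈ range N,
      if m < j ∧ j < k ∧ (k - m) % 2 = 0 ∧ (j - m) % 2 = 1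
      then yy N x j * yy N x k else 0) +
  (∑ j ∈ range N, ∑ k ∈ range N,
      if j < m ∧ m < k ∧ (k - j) % 2 = 0 ∧ (m - j) % 2 = 1
      then yy N x j * yy N x k else 0) +
  (∑ j ∈ range N, ∑ k ∈ range N,
      if j < k ∧ k < m ∧ (m - j) % 2 = 0 ∧ (k - j) % 2 = 1
      then yy N x j * yy N x k else 0)

lemma yy_val (N : ℕ) (x : Fin N → ℝ) (i : Fin N) : yy N x i.val = x i := by
  simp [yy, i.isLt]

lemma L0 (N : ℕ) (x : Fin N → ℝ) (i : Fin N) : Spartial x i = SP N x i.val := by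
  unfold Spartial SP
  simp only [Finset.sum_range]
  refine congrArg₂ (· + ·) (congrArg₂ (· + ·) ?_ ?_) ?_ <;>
  · refine Finset.sum_congr rfl fun j _ => Finset.sum_congr rfl fun k _ => ?_
    rw [yy_val, yy_val]
    exact if_congr (by simp only [Fin.lt_def]) rfl rfl

lemma helper_ext {n N : ℕ} (hn : n ≤ N) (p : ℕ → Prop) [DecidablePred p] (g : ℕ → ℝ) :
    ∑ j ∈ range N, (if j < n ∧ p j then g j else 0) = ∑ j ∈ range n, (if p j then g j else 0) := by
  rw [← Finset.sum_subset (Finset.range_subset_range.mpr hn)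
    (fun j _ hj => if_neg (fun hc => hj (Finset.mem_range.mpr hc.1)))]
  exact Finset.sum_congr rfl fun j hj =>
    if_congr (and_iff_right (Finset.mem_range.mp hj)) rfl rfl

lemma L1 (N : ℕ) (x : Fin N → ℝ) (m : ℕ) (hm : m < N) :
    SP N x m = AA N x m * BB N x m + SS1 N x m + SS2 N x m := by
  have P1 : (∑ j ∈ range N, ∑ k ∈ range N,
      if m < j ∧ j < k ∧ (k - m) % 2 = 0 ∧ (j - m) % 2 = 1
      then yy N x j * yy N x k else 0) = SS2 N x m := by
    refine Finset.sum_congr rfl fun j _ => ?_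
    by_cases h : m < j ∧ (j + m) % 2 = 1
    · rw [if_pos h]
      unfold BB
      rw [Finset.mul_sum]
      exact Finset.sum_congr rfl fun k _ => by
        rw [mul_ite, mul_zero]; exact if_congr (by omega) rfl rfl
    · rw [if_neg h]
      exact Finset.sum_eq_zero fun k _ => if_neg (by omega)
  have P2 : (∑ j ∈ range N, ∑ k ∈ range N,
      if j < m ∧ m < k ∧ (k - j) % 2 = 0 ∧ (m - j) % 2 = 1
      then yy N x j * yy N x k else 0) = AA N x m * BB N x m := by
    have step1 : ∀ j, (∑ k ∈ range N,
        if j < m ∧ m < k ∧ (k - j) % 2 = 0 ∧ (m - j) % 2 = 1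
        then yy N x j * yy N x k else 0)
        = if j < m ∧ (j + m) % 2 = 1 then yy N x j * BB N x m else 0 := by
      intro j
      by_cases h : j < m ∧ (j + m) % 2 = 1
      · rw [if_pos h]
        unfold BB
        rw [Finset.mul_sum]
        exact Finset.sum_congr rfl fun k _ => by
          rw [mul_ite, mul_zero]; exact if_congr (by omega) rfl rfl
      · rw [if_neg h]
        exact Finset.sum_eq_zero fun k _ => if_neg (by omega)
    rw [Finset.sum_congr rfl fun j _ => step1 j, helper_ext hm.le]
    unfold AA
    rw [Finset.sum_mul]
    exact Finset.sum_congr rfl fun j _ => by rw [ite_mul, zero_mul]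
  have P3 : (∑ j ∈ range N, ∑ k ∈ range N,
      if j < k ∧ k < m ∧ (m - j) % 2 = 0 ∧ (k - j) % 2 = 1
      then yy N x j * yy N x k else 0) = SS1 N x m := by
    rw [Finset.sum_comm]
    have step1 : ∀ k ∈ range N, (∑ j ∈ range N,
        if j < k ∧ k < m ∧ (m - j) % 2 = 0 ∧ (k - j) % 2 = 1
        then yy N x j * yy N x k else 0)
        = if k < m ∧ (k + m) % 2 = 1 then yy N x k * AA N x k else 0 := by
      intro k hk
      by_cases h : k < m ∧ (k + m) % 2 = 1
      · rw [if_pos h]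
        have : (∑ j ∈ range N,
            if j < k ∧ k < m ∧ (m - j) % 2 = 0 ∧ (k - j) % 2 = 1
            then yy N x j * yy N x k else 0)
            = ∑ j ∈ range N, if j < k ∧ (j + k) % 2 = 1 then yy N x j * yy N x k else 0 :=
          Finset.sum_congr rfl fun j _ => if_congr (by omega) rfl rfl
        rw [this, helper_ext (Finset.mem_range.mp hk).le]
        unfold AA
        rw [mul_comm, Finset.sum_mul]
        exact Finset.sum_congr rfl fun j _ => by rw [ite_mul, zero_mul]
      · rw [if_neg h]
        exact Finset.sum_eq_zero fun j _ => if_neg (by omega)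
    rw [Finset.sum_congr rfl step1, helper_ext hm.le]
    rfl
  unfold SP
  rw [P1, P2, P3]
  ring

lemma AAsucc2 (N : ℕ) (x : Fin N → ℝ) (m : ℕ) :
    AA N x (m+2) = AA N x m + yy N x (m+1) := by
  unfold AA
  rw [Finset.sum_range_succ, Finset.sum_range_succ]
  have h1 : (if (m + (m+2)) % 2 = 1 then yy N x m else 0) = 0 := if_neg (by omega)
  have h2 : (if ((m+1) + (m+2)) % 2 = 1 then yy N x (m+1) else 0) = yy N x (m+1) :=
    if_pos (by omega)
  rw [h1, h2, add_zero]
  congr 1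
  exact Finset.sum_congr rfl fun t _ => if_congr (by omega) rfl rfl

lemma BBsucc2 (N : ℕ) (x : Fin N → ℝ) (m : ℕ) (hm : m + 1 < N) :
    BB N x m = BB N x (m+2) + yy N x (m+1) := by
  unfold BB
  have : ∀ t ∈ range N, (if m < t ∧ (t + m) % 2 = 1 then yy N x t else 0)
      = (if m + 2 < t ∧ (t + (m+2)) % 2 = 1 then yy N x t else 0)
        + (if t = m + 1 then yy N x t else 0) := by
    intro t _
    split_ifs <;> first | ring1 | (exfalso; omega)
  rw [Finset.sum_congr rfl this, Finset.sum_add_distrib, Finset.sum_ite_eq' (range N)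
    (m+1) (yy N x), if_pos (Finset.mem_range.mpr hm)]

lemma SS1succ2 (N : ℕ) (x : Fin N → ℝ) (m : ℕ) :
    SS1 N x (m+2) = SS1 N x m + yy N x (m+1) * AA N x (m+1) := by
  unfold SS1
  rw [Finset.sum_range_succ, Finset.sum_range_succ]
  have h1 : (if (m + (m+2)) % 2 = 1 then yy N x m * AA N x m else 0) = 0 := if_neg (by omega)
  have h2 : (if ((m+1) + (m+2)) % 2 = 1 then yy N x (m+1) * AA N x (m+1) else 0)
      = yy N x (m+1) * AA N x (m+1) := if_pos (by omega)
  rw [h1, h2, add_zero]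
  congr 1
  exact Finset.sum_congr rfl fun t _ => if_congr (by omega) rfl rfl

lemma SS2succ2 (N : ℕ) (x : Fin N → ℝ) (m : ℕ) (hm : m + 1 < N) :
    SS2 N x m = SS2 N x (m+2) + yy N x (m+1) * BB N x (m+1) := by
  unfold SS2
  have : ∀ t ∈ range N, (if m < t ∧ (t + m) % 2 = 1 then yy N x t * BB N x t else 0)
      = (if m + 2 < t ∧ (t + (m+2)) % 2 = 1 then yy N x t * BB N x t else 0)
        + (if t = m + 1 then yy N x t * BB N x t else 0) := by
    intro t _
    split_ifs <;> first | ring1 | (exfalso; omega)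
  rw [Finset.sum_congr rfl this, Finset.sum_add_distrib,
    Finset.sum_ite_eq' (range N) (m+1) (fun t => yy N x t * BB N x t),
    if_pos (Finset.mem_range.mpr hm)]

lemma CCsucc (N : ℕ) (x : Fin N → ℝ) (m : ℕ) :
    CC N x (m+1) = CC N x m + yy N x m := Finset.sum_range_succ _ _

lemma AAsucc (N : ℕ) (x : Fin N → ℝ) (m : ℕ) :
    AA N x (m+1) = CC N x m - AA N x m + yy N x m := by
  unfold AA CC
  rw [Finset.sum_range_succ, if_pos (by omega)]
  have : ∀ t ∈ range m, (if (t + (m+1)) % 2 = 1 then yy N x t else 0)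
      = yy N x t - (if (t + m) % 2 = 1 then yy N x t else 0) := by
    intro t _
    split_ifs <;> first | ring1 | (exfalso; omega)
  rw [Finset.sum_congr rfl this, Finset.sum_sub_distrib]

lemma helper_ext0 {n N : ℕ} (hn : n ≤ N) (g : ℕ → ℝ) :
    ∑ j ∈ range N, (if j < n then g j else 0) = ∑ j ∈ range n, g j := by
  rw [← Finset.sum_subset (Finset.range_subset_range.mpr hn)
    (fun j _ hj => if_neg (fun hc => hj (Finset.mem_range.mpr hc)))]
  exact Finset.sum_congr rfl fun j hj => if_pos (Finset.mem_range.mp hj)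

lemma BBsucc (N : ℕ) (x : Fin N → ℝ) (m : ℕ) (hm : m < N) :
    BB N x m + BB N x (m+1) = CC N x N - CC N x (m+1) := by
  unfold BB
  rw [← Finset.sum_add_distrib]
  have : ∀ t ∈ range N, ((if m < t ∧ (t + m) % 2 = 1 then yy N x t else 0)
      + (if m + 1 < t ∧ (t + (m+1)) % 2 = 1 then yy N x t else 0))
      = yy N x t - (if t < m + 1 then yy N x t else 0) := by
    intro t _
    split_ifs <;> first | ring1 | (exfalso; omega)
  rw [Finset.sum_congr rfl this, Finset.sum_sub_distrib]
  unfold CC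
  congr 1
  exact helper_ext0 (by omega) _

lemma CCN (N : ℕ) (x : Fin N → ℝ) (hsum : ∑ i, x i = 2) : CC N x N = 2 := by
  unfold CC
  rw [Finset.sum_range]
  simp only [yy_val]
  exact hsum

lemma Ldiff (N : ℕ) (x : Fin N → ℝ) (m : ℕ) (hm : m + 2 < N) :
    SP N x (m+2) - SP N x m = yy N x (m+1) *
      (BB N x m - AA N x m - yy N x (m+1) + AA N x (m+1) - BB N x (m+1)) := by
  rw [L1 N x (m+2) hm, L1 N x m (by omega), AAsucc2, SS1succ2,
      BBsucc2 N x m (by omega), SS2succ2 N x m (by omega)]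
  ring

lemma myRel (N : ℕ) (x : Fin N → ℝ) (hx0 : ∀ i, 0 < x i) (hsum : ∑ i, x i = 2)
    (hcrit : ∀ i i' : Fin N, Spartial x i = Spartial x i') (m : ℕ) (hm : m + 2 < N) :
    2*BB N x m - 2*AA N x m + 2*CC N x m + 2*yy N x m - 2 = yy N x (m+1) := by
  have hySP : SP N x (m+2) = SP N x m := by
    have h := hcrit ⟨m+2, hm⟩ ⟨m, by omega⟩
    rwa [L0, L0] at h
  have hy1 : 0 < yy N x (m+1) := by
    have h : yy N x (m+1) = x ⟨m+1, by omega⟩ := yy_val N x ⟨m+1, by omega⟩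
    rw [h]; exact hx0 _
  have hd := Ldiff N x m hm
  rw [hySP, sub_self] at hd
  have hexpr : BB N x m - AA N x m - yy N x (m+1) + AA N x (m+1) - BB N x (m+1) = 0 := by
    rcases mul_eq_zero.mp hd.symm with h | h
    · exact absurd h (ne_of_gt hy1)
    · exact h
  have he := AAsucc N x m
  have hf := BBsucc N x m (by omega)
  have hg := CCsucc N x m
  have hCN : CC N x N = 2 := CCN N x hsum
  rw [hCN] at hf
  linarith

lemma ystep (N : ℕ) (x : Fin N → ℝ) (hx0 : ∀ i, 0 < x i) (hsum : ∑ i, x i = 2)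
    (hcrit : ∀ i i' : Fin N, Spartial x i = Spartial x i') (m : ℕ) (hm : m + 3 < N) :
    yy N x (m+2) = yy N x (m+1) := by
  have r1 := myRel N x hx0 hsum hcrit m (by omega)
  have r2 := myRel N x hx0 hsum hcrit (m+1) (by omega)
  have he := AAsucc N x m
  have hf := BBsucc N x m (by omega)
  have hg := CCsucc N x m
  have hCN : CC N x N = 2 := CCN N x hsum
  rw [hCN] at hf
  linarith

lemma sum_odd_reindex (f : ℕ → ℝ) (n : ℕ) :
    ∑ j ∈ range n, (if j % 2 = 1 then f j else 0) = ∑ s ∈ range (n/2), f (2*s+1) := by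
  induction n with
  | zero => simp
  | succ n ih =>
    rw [Finset.sum_range_succ, ih]
    by_cases h : n % 2 = 1
    · rw [if_pos h]
      have h2 : (n+1)/2 = n/2 + 1 := by omega
      rw [h2, Finset.sum_range_succ]
      congr 2
      omega
    · rw [if_neg h, add_zero]
      have h2 : (n+1)/2 = n/2 := by omega
      rw [h2]

lemma sum_even_reindex (f : ℕ → ℝ) (n : ℕ) :
    ∑ j ∈ range n, (if j % 2 = 0 then f j else 0) = ∑ s ∈ range ((n+1)/2), f (2*s) := by
  induction n with
  | zero => simp
  | succ n ih =>
    rw [Finset.sum_range_succ, ih]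
    by_cases h : n % 2 = 0
    · rw [if_pos h]
      have h2 : (n+2)/2 = (n+1)/2 + 1 := by omega
      rw [h2, Finset.sum_range_succ]
      congr 2
      omega
    · rw [if_neg h, add_zero]
      have h2 : (n+2)/2 = (n+1)/2 := by omega
      rw [h2]

lemma hconstL (N : ℕ) (x : Fin N → ℝ) (hx0 : ∀ i, 0 < x i) (hsum : ∑ i, x i = 2)
    (hcrit : ∀ i i' : Fin N, Spartial x i = Spartial x i') :
    ∀ t, 1 ≤ t → t + 1 < N → yy N x t = yy N x 1 := by
  intro t
  induction t with
  | zero => intro h; omega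
  | succ u ih =>
    intro _ htN
    by_cases hu : u = 0
    · subst hu; rfl
    · have hstep : yy N x (u+1) = yy N x u := by
        obtain ⟨v, rfl⟩ : ∃ v, u = v + 1 := ⟨u-1, by omega⟩
        exact ystep N x hx0 hsum hcrit v (by omega)
      rw [hstep]
      exact ih (by omega) (by omega)

theorem stmt_16 (N : ℕ) (hN : Odd N) (hN3 : 3 ≤ N) (x : Fin N → ℝ)
    (hx0 : ∀ i, 0 < x i) (hx1 : ∀ i, x i ≤ 1) (hsum : ∑ i, x i = 2)
    (hcrit : ∀ i i' : Fin N, Spartial x i = Spartial x i') :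
    ∀ i, x i = 2 / N := by
  obtain ⟨M, hM⟩ := hN
  have hM1 : 1 ≤ M := by omega
  have hconst : ∀ t, 1 ≤ t → t + 1 < N → yy N x t = yy N x 1 :=
    hconstL N x hx0 hsum hcrit
  have hd0 : 0 < yy N x 0 := by
    have h : yy N x 0 = x ⟨0, by omega⟩ := yy_val N x ⟨0, by omega⟩
    rw [h]; exact hx0 _
  -- EqA
  have hBB0 : BB N x 0 = (M:ℝ) * yy N x 1 := by
    unfold BB
    have h1 : ∀ t ∈ range N, (if 0 < t ∧ (t + 0) % 2 = 1 then yy N x t else 0)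
        = (if t % 2 = 1 then yy N x 1 else 0) := by
      intro t ht
      have htN := Finset.mem_range.mp ht
      by_cases h : t % 2 = 1
      · rw [if_pos (by omega), if_pos h]
        exact hconst t (by omega) (by omega)
      · rw [if_neg (by omega), if_neg h]
    rw [Finset.sum_congr rfl h1, sum_odd_reindex, Finset.sum_const, Finset.card_range]
    have h2 : N / 2 = M := by omega
    rw [h2, nsmul_eq_mul]
  have hAA0 : AA N x 0 = 0 := Finset.sum_range_zero _
  have hCC0 : CC N x 0 = 0 := Finset.sum_range_zero _
  have eqA : 2*((M:ℝ) * yy N x 1) + 2 * yy N x 0 - 2 = yy N x 1 := by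
    have h := myRel N x hx0 hsum hcrit 0 (by omega)
    rw [hBB0, hAA0, hCC0] at h
    linarith
  -- EqB
  have eqB : (2*(M:ℝ) - 1) * yy N x 1 + yy N x 0 + yy N x (N-1) = 2 := by
    have h2 : CC N x N = 2 := CCN N x hsum
    unfold CC at h2
    have hN1 : range N = range ((2*M - 1 + 1) + 1) := by
      congr 1; omega
    rw [hN1, Finset.sum_range_succ, Finset.sum_range_succ'] at h2
    have hmid : ∀ i ∈ range (2*M - 1), yy N x (i+1) = yy N x 1 := by
      intro i hi
      exact hconst (i+1) (by omega) (by have := Finset.mem_range.mp hi; omega)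
    rw [Finset.sum_congr rfl hmid, Finset.sum_const, Finset.card_range, nsmul_eq_mul] at h2
    have h3 : 2*M - 1 + 1 = N - 1 := by omega
    rw [h3] at h2
    have h4 : ((2*M - 1 : ℕ):ℝ) = 2*(M:ℝ) - 1 := by
      rw [Nat.cast_sub (by omega)]; push_cast; ring
    rw [h4] at h2
    linarith
  have hde : yy N x (N-1) = yy N x 0 := by linarith
  -- final equation pieces
  have hBBN1 : BB N x (N-1) = 0 :=
    Finset.sum_eq_zero fun t ht => if_neg (by have := Finset.mem_range.mp ht; omega)
  have hSS2N1 : SS2 N x (N-1) = 0 :=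
    Finset.sum_eq_zero fun t ht => if_neg (by have := Finset.mem_range.mp ht; omega)
  have hSS2N2 : SS2 N x (N-2) = 0 := by
    refine Finset.sum_eq_zero fun j hj => ?_
    have hjN := Finset.mem_range.mp hj
    by_cases h : j = N-1
    · subst h; rw [hBBN1, mul_zero, ite_self]
    · exact if_neg (by omega)
  have hBBN2 : BB N x (N-2) = yy N x (N-1) := by
    unfold BB
    refine (Finset.sum_eq_single (N-1)
      (fun t ht hne => if_neg (by have := Finset.mem_range.mp ht; omega))
      (fun h => absurd (Finset.mem_range.mpr (by omega)) h)).trans ?_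
    exact if_pos (by omega)
  have hAeven : ∀ s, 2*s < N → AA N x (2*s) = (s:ℝ) * yy N x 1 := by
    intro s hs
    unfold AA
    have h1 : ∀ t ∈ range (2*s), (if (t + 2*s) % 2 = 1 then yy N x t else 0)
        = (if t % 2 = 1 then yy N x t else 0) := fun t ht => if_congr (by omega) rfl rfl
    rw [Finset.sum_congr rfl h1, sum_odd_reindex]
    have h2 : 2*s/2 = s := by omega
    rw [h2]
    have h3 : ∀ r ∈ range s, yy N x (2*r+1) = yy N x 1 := fun r hr =>
      hconst (2*r+1) (by omega) (by have := Finset.mem_range.mp hr; omega)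
    rw [Finset.sum_congr rfl h3, Finset.sum_const, Finset.card_range, nsmul_eq_mul]
  have hAodd : ∀ s, 2*s+2 < N → AA N x (2*s+1) = yy N x 0 + (s:ℝ) * yy N x 1 := by
    intro s hs
    unfold AA
    have h1 : ∀ t ∈ range (2*s+1), (if (t + (2*s+1)) % 2 = 1 then yy N x t else 0)
        = (if t % 2 = 0 then yy N x t else 0) := fun t ht => if_congr (by omega) rfl rfl
    rw [Finset.sum_congr rfl h1, sum_even_reindex]
    have h2 : (2*s+1+1)/2 = s+1 := by omega
    rw [h2, Finset.sum_range_succ']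
    have h3 : ∀ r ∈ range s, yy N x (2*(r+1)) = yy N x 1 := fun r hr =>
      hconst (2*(r+1)) (by omega) (by have := Finset.mem_range.mp hr; omega)
    rw [Finset.sum_congr rfl h3, Finset.sum_const, Finset.card_range, nsmul_eq_mul]
    norm_num
    ring
  have hSS1N1 : SS1 N x (N-1)
      = ∑ s ∈ range M, yy N x 1 * (yy N x 0 + (s:ℝ) * yy N x 1) := by
    unfold SS1
    have h1 : ∀ j ∈ range (N-1), (if (j + (N-1)) % 2 = 1 then yy N x j * AA N x j else 0)
        = (if j % 2 = 1 then yy N x j * AA N x j else 0) := fun j hj =>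
      if_congr (by omega) rfl rfl
    rw [Finset.sum_congr rfl h1, sum_odd_reindex]
    have h2 : (N-1)/2 = M := by omega
    rw [h2]
    refine Finset.sum_congr rfl fun s hs => ?_
    have hsM := Finset.mem_range.mp hs
    rw [hconst (2*s+1) (by omega) (by omega), hAodd s (by omega)]
  have hSS1N2 : SS1 N x (N-2) = ∑ s ∈ range M, yy N x 1 * ((s:ℝ) * yy N x 1) := by
    unfold SS1
    have h1 : ∀ j ∈ range (N-2), (if (j + (N-2)) % 2 = 1 then yy N x j * AA N x j else 0)
        = (if j % 2 = 0 then yy N x j * AA N x j else 0) := fun j hj =>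
      if_congr (by omega) rfl rfl
    rw [Finset.sum_congr rfl h1, sum_even_reindex]
    have h2 : (N-2+1)/2 = M := by omega
    rw [h2]
    refine Finset.sum_congr rfl fun s hs => ?_
    have hsM := Finset.mem_range.mp hs
    by_cases h : s = 0
    · subst h; simp [AA]
    · rw [hconst (2*s) (by omega) (by omega), hAeven s (by omega)]
  have hfin : SP N x (N-2) = SP N x (N-1) := by
    have h := hcrit ⟨N-2, by omega⟩ ⟨N-1, by omega⟩
    rwa [L0, L0] at h
  rw [L1 N x (N-2) (by omega), L1 N x (N-1) (by omega), hBBN1, hSS2N1, hSS2N2, hBBN2,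
    hSS1N1, hSS1N2, mul_zero] at hfin
  have hAN2 : AA N x (N-2) = yy N x 0 + ((M-1:ℕ):ℝ) * yy N x 1 := by
    have h := hAodd (M-1) (by omega)
    have h2 : 2*(M-1)+1 = N-2 := by omega
    rwa [h2] at h
  rw [hAN2] at hfin
  have hsum1 : ∑ s ∈ range M, yy N x 1 * (yy N x 0 + (s:ℝ) * yy N x 1)
      = (M:ℝ) * (yy N x 1 * yy N x 0) + ∑ s ∈ range M, yy N x 1 * ((s:ℝ) * yy N x 1) := by
    have h1 : ∀ s ∈ range M, yy N x 1 * (yy N x 0 + (s:ℝ) * yy N x 1)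
        = yy N x 1 * yy N x 0 + yy N x 1 * ((s:ℝ) * yy N x 1) := fun s _ => by ring
    rw [Finset.sum_congr rfl h1, Finset.sum_add_distrib, Finset.sum_const,
      Finset.card_range, nsmul_eq_mul]
  have hcastM : ((M-1:ℕ):ℝ) = (M:ℝ) - 1 := by
    rw [Nat.cast_sub hM1]; norm_num
  have key2 : yy N x 0 * (yy N x 0 - yy N x 1) = 0 := by
    rw [hde, hcastM] at hfin
    rw [hsum1] at hfin
    linear_combination hfin
  have hy0c : yy N x 0 = yy N x 1 := by
    rcases mul_eq_zero.mp key2 with h | h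
    · exact absurd h (ne_of_gt hd0)
    · linarith [sub_eq_zero.mp h]
  have hNR : (N:ℝ) = 2*(M:ℝ) + 1 := by rw [hM]; push_cast; ring
  have hcN : yy N x 1 * (N:ℝ) = 2 := by
    rw [hNR]; rw [hy0c] at eqA; linarith
  have hNne : (N:ℝ) ≠ 0 := by positivity
  have hc : yy N x 1 = 2 / (N:ℝ) := by field_simp at hcN ⊢; linarith
  intro i
  rw [← yy_val N x i]
  have hi := i.isLt
  by_cases h0 : i.val = 0
  · rw [h0, hy0c, hc]
  · by_cases h1 : i.val = N-1
    · rw [h1, hde, hy0c, hc]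
    · rw [hconst i.val (by omega) (by omega), hc]
end
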